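/- For θ ∈ [0, π/4], let t_θ be an intersection point of the level sets {a : Re f_{1,θ}(a) = 0} and {a : Re f_{-1,θ}(a) = 0} lying in the closed upper half-plane with -1 ≤ Re t_θ. Then Re t_θ ≤ 0. Equivalently: if a satisfies Im a > 0, Re a > 0, Re f_{1,θ}(a) = 0 and Re f_{-1,θ}(a) = 0, then 0 < arg ∫_{-1}^{1} e^{iθ}√(p_a(t)) dt < π/2, so a does not lie on Σ_θ, contradicting the closed-curve structure; hence no such intersection has positive real part. -/

import Mathlib

open Complex Set intervalIntegral

noncomputable section

/-- `p_a(z) = (z - a)(z² - 1)`. -/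
def pa (a z : ℂ) : ℂ := (z - a) * (z ^ 2 - 1)

/-- `q` is a continuous branch of `√(p_a)` along the straight segment `[e, a]`. -/
def SegBranch (a e : ℂ) (q : ℝ → ℂ) : Prop :=
  ContinuousOn q (Icc (0:ℝ) 1) ∧
    ∀ t ∈ Icc (0:ℝ) 1, (q t) ^ 2 = pa a (e + (t : ℂ) * (a - e))

/-- `Re f_{e,θ}(a) = Re (e^{iθ} ∫_{[e,a]} √(p_a)) = 0`. -/
def OnLevel (θ : ℝ) (a e : ℂ) : Prop :=
  ∃ q : ℝ → ℂ, SegBranch a e q ∧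
    (Complex.exp (Complex.I * θ) * ((a - e) * ∫ t in (0:ℝ)..1, q t)).re = 0

/-- `∫_{-1}^1 √(p_a(t)) dt = ∫₀¹ √(1-t²)(√(a-t)+√(a+t)) dt` with principal square
roots, valid for `Im a > 0`. -/
def I16 (a : ℂ) : ℂ :=
  ∫ t in (0:ℝ)..1, (Real.sqrt (1 - t ^ 2) : ℂ) *
    ((a - t) ^ ((1:ℂ)/2) + (a + t) ^ ((1:ℂ)/2))

/-! For `Im a > 0`, `Re a > 0` and `0 < t < 1`, the principal roots `u = √(a - t)` and
`v = √(a + t)` lie in the upper half-plane with `Im v < Re v`, and `u, v` have equal `Re · Im`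
while `|u| < |v|` (as `|a - t| < |a + t|`); hence `(Im u - Re u)² < (Re v - Im v)²`, which puts
`u + v` in the sector `0 < arg < π/4`. The sector is convex, so the integral `I16 a` lies in it
too, and a rotation by `θ ∈ [0, π/4]` moves it into the open first quadrant. -/

/-- The open sector `0 < arg z < π/4`. -/
def firstOctant : Set ℂ := {z | 0 < z.im ∧ z.im < z.re}

namespace Complex

lemma re_cpow_inv_two_nonneg (z : ℂ) : 0 ≤ (z ^ (2⁻¹ : ℂ)).re := by
  rw [cpow_inv_two_re]
  exact Real.sqrt_nonneg _

lemma im_cpow_inv_two_pos {z : ℂ} (hz : 0 < z.im) : 0 < (z ^ (2⁻¹ : ℂ)).im := by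
  rw [cpow_inv_two_im_eq_sqrt hz.le, Real.sqrt_pos]
  have := abs_re_lt_norm.2 hz.ne'
  linarith [le_abs_self z.re]

lemma im_cpow_inv_two_lt_re {z : ℂ} (hz : 0 < z.re) :
    (z ^ (2⁻¹ : ℂ)).im < (z ^ (2⁻¹ : ℂ)).re := by
  set w := z ^ (2⁻¹ : ℂ)
  have hw : w ^ 2 = z := by exact_mod_cast cpow_nat_inv_pow z two_ne_zero
  have hsq : w.re ^ 2 - w.im ^ 2 = z.re := by rw [← hw, pow_two w, mul_re]; ring
  have hre : 0 ≤ w.re := re_cpow_inv_two_nonneg z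
  by_contra! h
  nlinarith [mul_nonneg (sub_nonneg.2 h) (add_nonneg hre (hre.trans h))]

lemma arg_pos_of_im_pos {z : ℂ} (hz : 0 < z.im) : 0 < z.arg :=
  (arg_nonneg_iff.2 hz.le).lt_of_ne fun h ↦ hz.ne' (arg_eq_zero_iff.1 h.symm).2

lemma norm_sub_ofReal_lt_norm_add_ofReal {a : ℂ} (ha : 0 < a.re) {t : ℝ} (ht : 0 < t) :
    ‖a - t‖ < ‖a + t‖ := by
  rw [← sq_lt_sq₀ (norm_nonneg _) (norm_nonneg _), ← normSq_eq_norm_sq, ← normSq_eq_norm_sq,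
    normSq_apply, normSq_apply]
  simp only [sub_re, add_re, sub_im, add_im, ofReal_re, ofReal_im]
  nlinarith

end Complex

lemma Continuous.cpow_inv_two_of_im_pos {f : ℝ → ℂ} (hf : Continuous f)
    (him : ∀ t, 0 < (f t).im) : Continuous fun t ↦ f t ^ (2⁻¹ : ℂ) :=
  hf.cpow continuous_const fun t ↦ mem_slitPlane_iff.2 (Or.inr (him t).ne')

lemma add_mem_firstOctant {u v : ℂ} (hu : 0 < u.im) (hv : 0 < v.im) (hv' : v.im < v.re)
    (him : (u ^ 2).im = (v ^ 2).im) (hnorm : ‖u ^ 2‖ < ‖v ^ 2‖) : u + v ∈ firstOctant := by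
  rw [norm_pow, norm_pow, sq_lt_sq₀ (norm_nonneg _) (norm_nonneg _),
    ← sq_lt_sq₀ (norm_nonneg _) (norm_nonneg _), ← normSq_eq_norm_sq, ← normSq_eq_norm_sq,
    normSq_apply, normSq_apply] at hnorm
  rw [sq, sq, mul_im, mul_im] at him
  have hsq : (u.im - u.re) ^ 2 < (v.re - v.im) ^ 2 := by nlinarith
  refine ⟨by rw [add_im]; positivity, ?_⟩
  rw [add_im, add_re]
  nlinarith [abs_lt_of_sq_lt_sq hsq (by linarith), le_abs_self (u.im - u.re)]

lemma cpow_inv_two_sub_add_cpow_inv_two_add_mem_firstOctant {a : ℂ} (him : 0 < a.im)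
    (hre : 0 < a.re) {t : ℝ} (ht : 0 < t) :
    (a - t) ^ (2⁻¹ : ℂ) + (a + t) ^ (2⁻¹ : ℂ) ∈ firstOctant := by
  have hsq (z : ℂ) : (z ^ (2⁻¹ : ℂ)) ^ 2 = z := by
    exact_mod_cast cpow_nat_inv_pow z two_ne_zero
  refine add_mem_firstOctant (im_cpow_inv_two_pos (by simpa using him))
    (im_cpow_inv_two_pos (by simpa using him)) (im_cpow_inv_two_lt_re (by simp; linarith))
    (by simp [hsq]) ?_
  simpa [hsq] using norm_sub_ofReal_lt_norm_add_ofReal hre ht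

lemma integral_mem_firstOctant {f : ℝ → ℂ} {a b : ℝ} (hab : a < b)
    (hf : IntervalIntegrable f MeasureTheory.volume a b)
    (hmem : ∀ t ∈ Ioo a b, f t ∈ firstOctant) : (∫ t in a..b, f t) ∈ firstOctant := by
  have hre : (∫ t in a..b, f t).re = ∫ t in a..b, (f t).re :=
    (ContinuousLinearMap.intervalIntegral_comp_comm reCLM hf).symm
  have him : (∫ t in a..b, f t).im = ∫ t in a..b, (f t).im :=
    (ContinuousLinearMap.intervalIntegral_comp_comm imCLM hf).symm
  have hfre : IntervalIntegrable (fun t ↦ (f t).re) MeasureTheory.volume a b :=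
    ⟨hf.1.re, hf.2.re⟩
  have hfim : IntervalIntegrable (fun t ↦ (f t).im) MeasureTheory.volume a b :=
    ⟨hf.1.im, hf.2.im⟩
  rw [firstOctant, mem_ofPred_eq, hre, him]
  refine ⟨intervalIntegral_pos_of_pos_on hfim (fun t ht ↦ (hmem t ht).1) hab, ?_⟩
  rw [← sub_pos, ← integral_sub hfre hfim]
  exact intervalIntegral_pos_of_pos_on (hfre.sub hfim) (fun t ht ↦ sub_pos.2 (hmem t ht).2) hab

lemma I16_mem_firstOctant {a : ℂ} (him : 0 < a.im) (hre : 0 < a.re) : I16 a ∈ firstOctant := by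
  simp only [I16, one_div]
  have hcont : Continuous fun t : ℝ ↦
      (Real.sqrt (1 - t ^ 2) : ℂ) * ((a - t) ^ (2⁻¹ : ℂ) + (a + t) ^ (2⁻¹ : ℂ)) := by
    refine Continuous.mul (by fun_prop) (Continuous.add ?_ ?_) <;>
      exact Continuous.cpow_inv_two_of_im_pos (by fun_prop) fun _ ↦ by simpa using him
  refine integral_mem_firstOctant one_pos (hcont.intervalIntegrable 0 1) fun t ht ↦ ?_
  have hsqrt : 0 < Real.sqrt (1 - t ^ 2) := Real.sqrt_pos.2 (by nlinarith [ht.1, ht.2])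
  obtain ⟨h0, h1⟩ := cpow_inv_two_sub_add_cpow_inv_two_add_mem_firstOctant him hre ht.1
  rw [firstOctant, mem_ofPred_eq, re_ofReal_mul, im_ofReal_mul]
  exact ⟨mul_pos hsqrt h0, mul_lt_mul_of_pos_left h1 hsqrt⟩

lemma exp_mul_re_pos_im_pos_of_mem_firstOctant {θ : ℝ} (hθ : θ ∈ Icc 0 (Real.pi / 4)) {z : ℂ}
    (hz : z ∈ firstOctant) : 0 < (exp (I * θ) * z).re ∧ 0 < (exp (I * θ) * z).im := by
  obtain ⟨hθ0, hθ1⟩ := hθ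
  obtain ⟨hz0, hz1⟩ := hz
  have hcos : 0 < Real.cos θ :=
    Real.cos_pos_of_mem_Ioo ⟨by linarith [Real.pi_pos], by linarith [Real.pi_pos]⟩
  have hsin : 0 ≤ Real.sin θ := Real.sin_nonneg_of_nonneg_of_le_pi hθ0 (by linarith)
  have hsc : Real.sin θ ≤ Real.cos θ := by
    rw [← Real.cos_pi_div_two_sub]
    exact Real.cos_le_cos_of_nonneg_of_le_pi hθ0 (by linarith) (by linarith)
  rw [mul_comm I, mul_re, mul_im, exp_ofReal_mul_I_re, exp_ofReal_mul_I_im]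
  constructor <;> nlinarith

theorem stmt16_general (θ : ℝ) (hθ : θ ∈ Icc (0:ℝ) (Real.pi / 4)) (a : ℂ)
    (ha : 0 < a.im) :
    -- if moreover `Re a > 0` then `0 < arg(e^{iθ}∫_{-1}^1 √(p_a)) < π/2`,
    -- hence `a ∉ Σ_θ`
    (0 < a.re →
      0 < (Complex.exp (Complex.I * θ) * I16 a).arg ∧
      (Complex.exp (Complex.I * θ) * I16 a).arg < Real.pi / 2 ∧
      (Complex.exp (Complex.I * θ) * I16 a).re ≠ 0) ∧
    -- so an intersection point `t_θ` lying also on `Σ_θ` has `Re t_θ ≤ 0`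
    ((Complex.exp (Complex.I * θ) * I16 a).re = 0 → a.re ≤ 0) := by
  have hquadrant (hre : 0 < a.re) :=
    exp_mul_re_pos_im_pos_of_mem_firstOctant hθ (I16_mem_firstOctant ha hre)
  refine ⟨fun hre ↦ ?_, fun h0 ↦ not_lt.1 fun hre ↦ (hquadrant hre).1.ne' h0⟩
  obtain ⟨hpos_re, hpos_im⟩ := hquadrant hre
  exact ⟨arg_pos_of_im_pos hpos_im, arg_lt_pi_div_two_iff.2 (Or.inl hpos_re), hpos_re.ne'⟩

theorem stmt16 (θ : ℝ) (hθ : θ ∈ Icc (0:ℝ) (Real.pi / 4)) (a : ℂ)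
    (ha : 0 < a.im) (h1 : OnLevel θ a 1) (hm1 : OnLevel θ a (-1)) :
    -- if moreover `Re a > 0` then `0 < arg(e^{iθ}∫_{-1}^1 √(p_a)) < π/2`,
    -- hence `a ∉ Σ_θ`
    (0 < a.re →
      0 < (Complex.exp (Complex.I * θ) * I16 a).arg ∧
      (Complex.exp (Complex.I * θ) * I16 a).arg < Real.pi / 2 ∧
      (Complex.exp (Complex.I * θ) * I16 a).re ≠ 0) ∧
    -- so an intersection point `t_θ` lying also on `Σ_θ` has `Re t_θ ≤ 0`
    ((Complex.exp (Complex.I * θ) * I16 a).re = 0 → a.re ≤ 0) :=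
  stmt16_general θ hθ a ha
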